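/- arXiv:1812.01518 — 8 statements merged into one kernel-verified Lean document; each statement's English description precedes it below -/
import Mathlib

section
/- Let s ∈ (0,1) and ν ∈ [0, 1−s]. There exists a constant C = C(s,ν) > 0 such that for all λ > 0, all Δt > 0 and every integer j ≥ 0, with φ(t) := e^{−λt} and t_j := jΔt, one has ∫_{t_j}^{t_{j+1}} φ(η) (∫_{η}^{t_{j+1}} t^{s−1} dt) dη ≤ C · Δt^{s+ν} · ∫_{t_j}^{t_{j+1}} φ(η) η^{−ν} dη. -/
open Real MeasureTheory intervalIntegral

/-- Let `s ∈ (0,1)` and `ν ∈ [0, 1−s]`. There exists `C = C(s,ν) > 0` such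
that for all `λ > 0`, `Δt > 0` and every integer `j ≥ 0`, with `φ(t) = e^{−λt}` and
`t_j = jΔt`, one has
`∫_{t_j}^{t_{j+1}} φ(η) (∫_η^{t_{j+1}} t^{s−1} dt) dη ≤ C Δt^{s+ν} ∫_{t_j}^{t_{j+1}} φ(η) η^{−ν} dη`. -/
theorem stmt0 (s ν : ℝ) (hs : s ∈ Set.Ioo (0:ℝ) 1) (hν : ν ∈ Set.Icc (0:ℝ) (1 - s)) :
    ∃ C : ℝ, 0 < C ∧ ∀ lam Δt : ℝ, 0 < lam → 0 < Δt → ∀ j : ℕ,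
      (∫ η in ((j:ℝ) * Δt)..(((j:ℝ) + 1) * Δt),
          Real.exp (-lam * η) * ∫ t in η..(((j:ℝ) + 1) * Δt), t ^ (s - 1)) ≤
        C * Δt ^ (s + ν) *
          ∫ η in ((j:ℝ) * Δt)..(((j:ℝ) + 1) * Δt), Real.exp (-lam * η) * η ^ (-ν) := by
  obtain ⟨hs0, hs1⟩ := hs
  obtain ⟨hν0, hν1⟩ := hν
  refine ⟨1/s, by positivity, ?_⟩
  intro lam Δt hlam hΔt j
  set a : ℝ := (j:ℝ) * Δt with ha
  set b : ℝ := ((j:ℝ) + 1) * Δt with hb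
  have hab : a < b := by
    rw [ha, hb]; nlinarith
  have ha0 : 0 ≤ a := by positivity
  have hba : b - a = Δt := by rw [ha, hb]; ring
  -- closed form of the inner integral
  have hinner : ∀ η : ℝ, (∫ t in η..b, t ^ (s - 1)) = (b ^ s - η ^ s) / s := by
    intro η
    rw [integral_rpow (Or.inl (by linarith))]
    norm_num
  -- integrability of the left integrand
  have hL : IntervalIntegrable
      (fun η => Real.exp (-lam * η) * ∫ t in η..b, t ^ (s - 1)) volume a b := by
    have heq : (fun η => Real.exp (-lam * η) * ∫ t in η..b, t ^ (s - 1))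
        = fun η => Real.exp (-lam * η) * ((b ^ s - η ^ s) / s) := by
      funext η; rw [hinner]
    rw [heq]
    apply Continuous.intervalIntegrable
    exact (Real.continuous_exp.comp (by continuity)).mul
      (((continuous_const.sub (Real.continuous_rpow_const hs0.le)).div_const s))
  -- integrability of the right integrand
  have hR : IntervalIntegrable (fun η => Real.exp (-lam * η) * η ^ (-ν)) volume a b := by
    apply IntervalIntegrable.continuousOn_mul
    · exact intervalIntegral.intervalIntegrable_rpow' (by linarith)
    · exact (Real.continuous_exp.comp (by continuity)).continuousOn
  -- pointwise bound on Ioc a b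
  have key : ∀ η ∈ Set.Ioc a b,
      Real.exp (-lam * η) * ∫ t in η..b, t ^ (s - 1) ≤
        1/s * Δt ^ (s + ν) * (Real.exp (-lam * η) * η ^ (-ν)) := by
    intro η hη
    have hη0 : 0 < η := lt_of_le_of_lt ha0 hη.1
    have hmain : (∫ t in η..b, t ^ (s - 1)) ≤ 1/s * Δt ^ (s + ν) * η ^ (-ν) := by
      rcases Nat.eq_zero_or_pos j with hj | hj
      · -- j = 0 : a = 0, b = Δt
        have hbΔ : b = Δt := by rw [hb, hj]; push_cast; ring
        have hηΔ : η ≤ Δt := hbΔ ▸ hη.2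
        rw [hinner, hbΔ]
        have h1 : Δt ^ s - η ^ s ≤ Δt ^ s := by
          have : 0 ≤ η ^ s := Real.rpow_nonneg hη0.le s
          linarith
        have h2 : Δt ^ s ≤ Δt ^ (s + ν) * η ^ (-ν) := by
          have hsplit : Δt ^ s = Δt ^ (s + ν) * Δt ^ (-ν) := by
            rw [← Real.rpow_add hΔt]; ring_nf
          rw [hsplit]
          have : Δt ^ (-ν) ≤ η ^ (-ν) :=
            Real.rpow_le_rpow_of_nonpos hη0 hηΔ (by linarith)
          exact mul_le_mul_of_nonneg_left this (Real.rpow_nonneg hΔt.le _)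
        rw [div_le_iff₀ hs0] at *
        calc Δt ^ s - η ^ s ≤ Δt ^ s := h1
          _ ≤ Δt ^ (s + ν) * η ^ (-ν) := h2
          _ = 1/s * Δt ^ (s + ν) * η ^ (-ν) * s := by field_simp
      · -- j ≥ 1 : Δt ≤ a < η
        have hΔη : Δt ≤ η := by
          have : (1:ℝ) ≤ (j:ℝ) := by exact_mod_cast hj
          have := hη.1
          nlinarith
        have hηb : η ≤ b := hη.2
        have hstep1 : (∫ t in η..b, t ^ (s - 1)) ≤ (b - η) * η ^ (s - 1) := by
          have hmono : (∫ t in η..b, t ^ (s - 1)) ≤ ∫ _ in η..b, η ^ (s - 1) := by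
            apply intervalIntegral.integral_mono_on hηb
              (intervalIntegral.intervalIntegrable_rpow' (by linarith))
              intervalIntegrable_const
            intro t ht
            exact Real.rpow_le_rpow_of_nonpos hη0 ht.1 (by linarith)
          rwa [intervalIntegral.integral_const, smul_eq_mul] at hmono
        have hstep2 : (b - η) * η ^ (s - 1) ≤ Δt * η ^ (s - 1) := by
          have hbη : b - η ≤ Δt := by rw [← hba]; linarith [hη.1]
          exact mul_le_mul_of_nonneg_right hbη (Real.rpow_nonneg hη0.le _)
        have hstep3 : Δt * η ^ (s - 1) ≤ Δt ^ (s + ν) * η ^ (-ν) := by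
          have hsplit : η ^ (s - 1) = η ^ (s + ν - 1) * η ^ (-ν) := by
            rw [← Real.rpow_add hη0]; ring_nf
          have hcomp : η ^ (s + ν - 1) ≤ Δt ^ (s + ν - 1) :=
            Real.rpow_le_rpow_of_nonpos hΔt hΔη (by linarith)
          have hΔsplit : Δt * Δt ^ (s + ν - 1) = Δt ^ (s + ν) := by
            nth_rewrite 1 [← Real.rpow_one Δt]
            rw [← Real.rpow_add hΔt]; ring_nf
          calc Δt * η ^ (s - 1) = Δt * (η ^ (s + ν - 1) * η ^ (-ν)) := by rw [hsplit]
            _ ≤ Δt * (Δt ^ (s + ν - 1) * η ^ (-ν)) := by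
                apply mul_le_mul_of_nonneg_left _ hΔt.le
                exact mul_le_mul_of_nonneg_right hcomp (Real.rpow_nonneg hη0.le _)
            _ = Δt ^ (s + ν) * η ^ (-ν) := by rw [← mul_assoc, hΔsplit]
        have hfinal : Δt ^ (s + ν) * η ^ (-ν) ≤ 1/s * Δt ^ (s + ν) * η ^ (-ν) := by
          have h1s : (1:ℝ) ≤ 1/s := by
            rw [le_div_iff₀ hs0]; linarith
          nth_rewrite 1 [← one_mul (Δt ^ (s + ν))]
          apply mul_le_mul_of_nonneg_right _ (Real.rpow_nonneg hη0.le _)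
          exact mul_le_mul_of_nonneg_right h1s (Real.rpow_nonneg hΔt.le _)
        linarith
    calc Real.exp (-lam * η) * ∫ t in η..b, t ^ (s - 1)
        ≤ Real.exp (-lam * η) * (1/s * Δt ^ (s + ν) * η ^ (-ν)) :=
          mul_le_mul_of_nonneg_left hmain (Real.exp_nonneg _)
      _ = 1/s * Δt ^ (s + ν) * (Real.exp (-lam * η) * η ^ (-ν)) := by ring
  -- assemble
  have hmono : (∫ η in a..b, Real.exp (-lam * η) * ∫ t in η..b, t ^ (s - 1)) ≤
      ∫ η in a..b, 1/s * Δt ^ (s + ν) * (Real.exp (-lam * η) * η ^ (-ν)) := by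
    rw [intervalIntegral.integral_of_le hab.le, intervalIntegral.integral_of_le hab.le]
    exact setIntegral_mono_on hL.1 ((hR.const_mul _).1) measurableSet_Ioc key
  calc (∫ η in a..b, Real.exp (-lam * η) * ∫ t in η..b, t ^ (s - 1))
      ≤ ∫ η in a..b, 1/s * Δt ^ (s + ν) * (Real.exp (-lam * η) * η ^ (-ν)) := hmono
    _ = 1/s * Δt ^ (s + ν) * ∫ η in a..b, Real.exp (-lam * η) * η ^ (-ν) := by
        rw [intervalIntegral.integral_const_mul]
end

section
/- Let s ∈ (0,1) and ν ∈ (−s, 0). There exists a constant C = C(s,ν) > 0 such that for all λ > 0, all Δt > 0 and every integer j ≥ 1, with φ(t) := e^{−λt} and t_j := jΔt, one has ∫_{t_j}^{t_{j+1}} φ(η) (∫_{η}^{t_{j+1}} t^{s−1} dt) dη ≤ C · Δt^{s+ν} · ∫_{t_j}^{t_{j+1}} φ(η) η^{−ν} dη. -/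
open Real MeasureTheory intervalIntegral

/-! The constant `C = 1` works, already pointwise in `η`. On `[η, t_{j+1}]` the integrand
`t ^ (s - 1)` is at most `η ^ (s - 1)` and the interval has length at most `Δt`, so the inner
integral is at most `Δt * η ^ (s - 1)`. Since `j ≥ 1` we have `Δt ≤ η`, and as `1 - s - ν ≥ 0`
this gives `Δt ^ (1 - s - ν) ≤ η ^ (1 - s - ν)`, i.e.
`Δt * η ^ (s - 1) ≤ Δt ^ (s + ν) * η ^ (-ν)`. -/

lemma integral_rpow_le_sub_mul_rpow_of_nonpos {x y r : ℝ} (hx : 0 < x) (hxy : x ≤ y)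
    (hr : r ≤ 0) : ∫ t in x..y, t ^ r ≤ (y - x) * x ^ r := by
  have hbound : ∀ t ∈ Set.uIoc x y, ‖t ^ r‖ ≤ x ^ r := by
    intro t ht
    rw [Set.uIoc_of_le hxy] at ht
    rw [Real.norm_of_nonneg (rpow_nonneg (hx.trans ht.1).le _)]
    exact rpow_le_rpow_of_nonpos hx ht.1.le hr
  calc ∫ t in x..y, t ^ r ≤ ‖∫ t in x..y, t ^ r‖ := le_norm_self _
    _ ≤ x ^ r * |y - x| := norm_integral_le_of_norm_le_const hbound
    _ = (y - x) * x ^ r := by rw [abs_of_nonneg (sub_nonneg.mpr hxy), mul_comm]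

lemma mul_rpow_le_rpow_mul_rpow {d η p q : ℝ} (hd : 0 < d) (hdη : d ≤ η) (hp : p ≤ 1) :
    d * η ^ q ≤ d ^ p * η ^ (1 - p + q) := by
  have hη : 0 < η := hd.trans_le hdη
  calc d * η ^ q = d ^ p * (d ^ (1 - p) * η ^ q) := by
        rw [← mul_assoc, ← rpow_add hd, add_sub_cancel, rpow_one]
    _ ≤ d ^ p * (η ^ (1 - p) * η ^ q) := by gcongr
    _ = d ^ p * η ^ (1 - p + q) := by rw [rpow_add hη]

lemma integral_rpow_sub_one_le {s ν d η b : ℝ} (hs : s ≤ 1) (hsν : s + ν ≤ 1) (hd : 0 < d)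
    (hdη : d ≤ η) (hηb : η ≤ b) (hbη : b ≤ η + d) :
    ∫ t in η..b, t ^ (s - 1) ≤ d ^ (s + ν) * η ^ (-ν) := by
  have hη : 0 < η := hd.trans_le hdη
  calc ∫ t in η..b, t ^ (s - 1) ≤ (b - η) * η ^ (s - 1) :=
        integral_rpow_le_sub_mul_rpow_of_nonpos hη hηb (by linarith)
    _ ≤ d * η ^ (s - 1) := by gcongr; linarith
    _ ≤ d ^ (s + ν) * η ^ (1 - (s + ν) + (s - 1)) := mul_rpow_le_rpow_mul_rpow hd hdη hsν
    _ = d ^ (s + ν) * η ^ (-ν) := by ring_nf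

lemma continuousOn_integral_rpow_left {a b r : ℝ} (ha : 0 < a) (hab : a ≤ b) :
    ContinuousOn (fun η => ∫ t in η..b, t ^ r) (Set.Icc a b) := by
  rw [← Set.uIcc_of_le hab]
  refine continuousOn_primitive_interval_left
    (continuousOn_id.rpow_const fun t ht => ?_).integrableOn_uIcc
  rw [Set.uIcc_of_le hab] at ht
  exact Or.inl (ha.trans_le ht.1).ne'

theorem integral_mul_integral_rpow_sub_one_le {φ : ℝ → ℝ} {s ν d a b : ℝ} (hs : s ≤ 1)
    (hsν : s + ν ≤ 1) (hd : 0 < d) (hda : d ≤ a) (hab : a ≤ b) (hba : b ≤ a + d)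
    (hφ : ContinuousOn φ (Set.Icc a b)) (hφ_nonneg : ∀ η ∈ Set.Icc a b, 0 ≤ φ η) :
    ∫ η in a..b, φ η * ∫ t in η..b, t ^ (s - 1) ≤
      d ^ (s + ν) * ∫ η in a..b, φ η * η ^ (-ν) := by
  have ha : 0 < a := hd.trans_le hda
  have hleft : IntervalIntegrable (fun η => φ η * ∫ t in η..b, t ^ (s - 1)) volume a b :=
    (hφ.mul (continuousOn_integral_rpow_left ha hab)).intervalIntegrable_of_Icc hab
  have hright : IntervalIntegrable (fun η => d ^ (s + ν) * (φ η * η ^ (-ν))) volume a b :=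
    (continuousOn_const.mul (hφ.mul (continuousOn_id.rpow_const fun η hη =>
      Or.inl (ha.trans_le hη.1).ne'))).intervalIntegrable_of_Icc hab
  rw [← intervalIntegral.integral_const_mul]
  refine integral_mono_on hab hleft hright fun η hη => ?_
  calc φ η * ∫ t in η..b, t ^ (s - 1) ≤ φ η * (d ^ (s + ν) * η ^ (-ν)) :=
        mul_le_mul_of_nonneg_left (integral_rpow_sub_one_le hs hsν hd (hda.trans hη.1) hη.2
          (by linarith [hη.1])) (hφ_nonneg η hη)
    _ = d ^ (s + ν) * (φ η * η ^ (-ν)) := by ring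

/-- Let `s ∈ (0,1)` and `ν ∈ (−s, 0)`. There exists `C = C(s,ν) > 0` such
that for all `λ > 0`, `Δt > 0` and every integer `j ≥ 1`, with `φ(t) = e^{−λt}` and
`t_j = jΔt`, one has
`∫_{t_j}^{t_{j+1}} φ(η) (∫_η^{t_{j+1}} t^{s−1} dt) dη ≤ C Δt^{s+ν} ∫_{t_j}^{t_{j+1}} φ(η) η^{−ν} dη`. -/
theorem stmt1 (s ν : ℝ) (hs : s ∈ Set.Ioo (0:ℝ) 1) (hν : ν ∈ Set.Ioo (-s) (0:ℝ)) :
    ∃ C : ℝ, 0 < C ∧ ∀ lam Δt : ℝ, 0 < lam → 0 < Δt → ∀ j : ℕ, 1 ≤ j →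
      (∫ η in ((j:ℝ) * Δt)..(((j:ℝ) + 1) * Δt),
          Real.exp (-lam * η) * ∫ t in η..(((j:ℝ) + 1) * Δt), t ^ (s - 1)) ≤
        C * Δt ^ (s + ν) *
          ∫ η in ((j:ℝ) * Δt)..(((j:ℝ) + 1) * Δt), Real.exp (-lam * η) * η ^ (-ν) := by
  refine ⟨1, one_pos, fun lam Δt _ hΔt j hj => ?_⟩
  have hj1 : (1:ℝ) ≤ j := by exact_mod_cast hj
  rw [one_mul]
  exact integral_mul_integral_rpow_sub_one_le hs.2.le (by linarith [hν.2, hs.2]) hΔt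
    (by nlinarith) (by nlinarith) (by nlinarith) (by fun_prop) fun η _ => (exp_pos _).le
end

section
/- Let s ∈ (0,1) and r ∈ [0, 2−2s]. There exists a constant C = C(r,s) > 0 such that for all λ > 0, all Δt > 0 and every positive integer N, setting T := NΔt, t_j := jΔt and φ(t) := e^{−λt}, the piecewise-constant interpolant I[φ] of φ on the uniform grid satisfies |∫_0^T (I[φ](t) − φ(t)) t^{s−1} dt| ≤ C · λ^{r/2} · Δt^{s + r/2}. The constant C is independent of λ, Δt and N. -/
open Real MeasureTheory intervalIntegral

/-- The piecewise-constant interpolant of `φ` on the uniform grid `t_j = jΔt`: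
`I[φ](t) = φ(t_j)` for `t ∈ [t_j, t_{j+1})`. -/
noncomputable def pcInterp (Δt : ℝ) (φ : ℝ → ℝ) (t : ℝ) : ℝ :=
  φ ((⌊t / Δt⌋₊ : ℝ) * Δt)

/-!
On `[t_j, t_{j+1})` the error `e^{-λ t_j} - e^{-λ t}` is at most `min(1, λΔt) e^{-λ t_j}`, and
`e^{-λ t_j} ≤ e^{-λ (t - Δt)⁺}`. Integrating the kernel `e^{-λ (t - Δt)⁺} t^{s-1}` over `(0, ∞)`
gives at most `Δt^s / s` on `(0, Δt]` and, after the shift `t ↦ t + Δt`, at most `λ^{-s} Γ(s)`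
beyond. Finally `min(1, λΔt) ≤ (λΔt)^θ` for every `θ ∈ [0, 1]`; the choices `θ = r/2` and
`θ = s + r/2` turn both terms into `λ^{r/2} Δt^{s+r/2}`, and `r ≤ 2 - 2s` is exactly `θ ≤ 1`.
-/

open Set

lemma min_one_le_rpow {x θ : ℝ} (hx : 0 < x) (hθ₀ : 0 ≤ θ) (hθ₁ : θ ≤ 1) : min 1 x ≤ x ^ θ := by
  rcases le_total x 1 with h | h
  · calc min 1 x ≤ x ^ (1 : ℝ) := by simp
      _ ≤ x ^ θ := rpow_le_rpow_of_exponent_ge hx h hθ₁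
  · calc min 1 x ≤ x ^ (0 : ℝ) := by simp
      _ ≤ x ^ θ := rpow_le_rpow_of_exponent_le h hθ₀

lemma natFloor_div_mul_le {t Δt : ℝ} (ht : 0 ≤ t) (hΔt : 0 < Δt) :
    (⌊t / Δt⌋₊ : ℝ) * Δt ≤ t :=
  (le_div_iff₀ hΔt).mp (Nat.floor_le (div_nonneg ht hΔt.le))

lemma lt_natFloor_div_mul_add (t : ℝ) {Δt : ℝ} (hΔt : 0 < Δt) :
    t < (⌊t / Δt⌋₊ : ℝ) * Δt + Δt := by
  have := (div_lt_iff₀ hΔt).mp (Nat.lt_floor_add_one (t / Δt))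
  linarith

lemma exp_neg_mul_sub_exp_neg_mul_le {lam a t h : ℝ} (hlam : 0 ≤ lam) (hth : t ≤ a + h) :
    exp (-lam * a) - exp (-lam * t) ≤ min 1 (lam * h) * exp (-lam * a) := by
  have hsplit : exp (-lam * t) = exp (-lam * a) * exp (-(lam * (t - a))) := by
    rw [← exp_add]; ring_nf
  have hgap : 1 - exp (-(lam * (t - a))) ≤ min 1 (lam * h) :=
    le_min (by linarith [exp_pos (-(lam * (t - a)))])
      (by nlinarith [one_sub_le_exp_neg (lam * (t - a))])
  rw [hsplit]
  nlinarith [exp_pos (-lam * a)]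

section ExpKernel

variable {s lam Δt : ℝ}

lemma abs_pcInterp_exp_sub_le {t : ℝ} (hlam : 0 < lam) (hΔt : 0 < Δt) (ht : 0 ≤ t) :
    |pcInterp Δt (fun u => exp (-lam * u)) t - exp (-lam * t)|
      ≤ min 1 (lam * Δt) * exp (-lam * max (t - Δt) 0) := by
  set tj : ℝ := (⌊t / Δt⌋₊ : ℝ) * Δt
  have htj : tj ≤ t := natFloor_div_mul_le ht hΔt
  have htj' : t < tj + Δt := lt_natFloor_div_mul_add t hΔt
  have hmono : exp (-lam * t) ≤ exp (-lam * tj) := exp_le_exp.mpr (by nlinarith)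
  have hdelay : exp (-lam * tj) ≤ exp (-lam * max (t - Δt) 0) :=
    exp_le_exp.mpr (by nlinarith [max_le (by linarith : t - Δt ≤ tj) (by positivity : 0 ≤ tj)])
  change |exp (-lam * tj) - exp (-lam * t)| ≤ _
  rw [abs_of_nonneg (sub_nonneg.mpr hmono)]
  exact (exp_neg_mul_sub_exp_neg_mul_le hlam.le htj'.le).trans
    (mul_le_mul_of_nonneg_left hdelay (by positivity))

lemma integrableOn_rpow_mul_exp_neg_mul_Ioi (hs : 0 < s) (hlam : 0 < lam) :
    IntegrableOn (fun t : ℝ => t ^ (s - 1) * exp (-(lam * t))) (Ioi 0) := by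
  simpa using integrableOn_rpow_mul_exp_neg_mul_rpow (p := 1) (s := s - 1) (by linarith)
    zero_lt_one hlam

lemma integrableOn_exp_delay_mul_rpow (hs : 0 < s) (hlam : 0 < lam) :
    IntegrableOn (fun t : ℝ => exp (-lam * max (t - Δt) 0) * t ^ (s - 1)) (Ioi 0) := by
  refine ((integrableOn_rpow_mul_exp_neg_mul_Ioi hs hlam).const_mul (exp (lam * Δt))).mono'
    (by fun_prop) ?_
  filter_upwards [ae_restrict_mem measurableSet_Ioi] with t (ht : 0 < t)
  have hexp : exp (-lam * max (t - Δt) 0) ≤ exp (lam * Δt) * exp (-(lam * t)) := by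
    rw [← exp_add]
    exact exp_le_exp.mpr (by nlinarith [le_max_left (t - Δt) 0])
  rw [norm_of_nonneg (by positivity)]
  nlinarith [rpow_nonneg ht.le (s - 1)]

lemma setIntegral_Ioc_exp_delay_mul_rpow (hs : 0 < s) (hΔt : 0 < Δt) :
    ∫ t in Ioc 0 Δt, exp (-lam * max (t - Δt) 0) * t ^ (s - 1) = Δt ^ s / s := by
  rw [setIntegral_congr_fun measurableSet_Ioc (g := fun t => t ^ (s - 1)) fun t ht => by
      simp [max_eq_right (sub_nonpos.mpr ht.2)],
    ← integral_of_le hΔt.le, integral_rpow (Or.inl (by linarith)), sub_add_cancel,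
    zero_rpow hs.ne', sub_zero]

lemma setIntegral_Ioi_exp_delay_mul_rpow_le (hs₀ : 0 < s) (hs₁ : s < 1) (hlam : 0 < lam)
    (hΔt : 0 ≤ Δt) :
    ∫ t in Ioi Δt, exp (-lam * max (t - Δt) 0) * t ^ (s - 1) ≤ (1 / lam) ^ s * Gamma s := by
  have hshift : ∫ t in Ioi Δt, exp (-lam * max (t - Δt) 0) * t ^ (s - 1)
      = ∫ u in Ioi 0, exp (-lam * max u 0) * (u + Δt) ^ (s - 1) := by
    rw [← (measurePreserving_add_right volume Δt).setIntegral_preimage_emb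
      (measurableEmbedding_addRight Δt)]
    simp
  rw [hshift, ← integral_rpow_mul_exp_neg_mul_Ioi hs₀ hlam]
  refine integral_mono_of_nonneg ?_ (integrableOn_rpow_mul_exp_neg_mul_Ioi hs₀ hlam) ?_ <;>
    filter_upwards [ae_restrict_mem measurableSet_Ioi] with u (hu : 0 < u)
  · have : 0 < u + Δt := by linarith
    positivity
  · rw [max_eq_left hu.le, mul_comm, neg_mul]
    exact mul_le_mul_of_nonneg_right (rpow_le_rpow_of_nonpos hu (by linarith) (by linarith))
      (exp_pos _).le

lemma abs_integral_pcInterp_exp_sub_mul_rpow_le (hs₀ : 0 < s) (hs₁ : s < 1) (hlam : 0 < lam)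
    (hΔt : 0 < Δt) {T : ℝ} (hT : 0 ≤ T) :
    |∫ t in (0:ℝ)..T, (pcInterp Δt (fun u => exp (-lam * u)) t - exp (-lam * t)) * t ^ (s - 1)|
      ≤ min 1 (lam * Δt) * (Δt ^ s / s + (1 / lam) ^ s * Gamma s) := by
  set k : ℝ → ℝ := fun t => exp (-lam * max (t - Δt) 0) * t ^ (s - 1)
  have hk : IntegrableOn k (Ioi 0) := integrableOn_exp_delay_mul_rpow hs₀ hlam
  have hk_le : ∫ t in Ioi 0, k t ≤ Δt ^ s / s + (1 / lam) ^ s * Gamma s := by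
    rw [← Ioc_union_Ioi_eq_Ioi hΔt.le, setIntegral_union (Ioc_disjoint_Ioi le_rfl)
      measurableSet_Ioi (hk.mono_set Ioc_subset_Ioi_self) (hk.mono_set (Ioi_subset_Ioi hΔt.le)),
      setIntegral_Ioc_exp_delay_mul_rpow hs₀ hΔt]
    exact add_le_add_right (setIntegral_Ioi_exp_delay_mul_rpow_le hs₀ hs₁ hlam hΔt.le) _
  rw [← norm_eq_abs]
  calc _ ≤ ∫ t in (0:ℝ)..T, min 1 (lam * Δt) * k t := by
        refine norm_integral_le_of_norm_le hT (ae_of_all _ fun t ht => ?_) ?_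
        · rw [norm_mul, norm_of_nonneg (rpow_nonneg ht.1.le _), ← mul_assoc]
          exact mul_le_mul_of_nonneg_right (abs_pcInterp_exp_sub_le hlam hΔt ht.1.le)
            (rpow_nonneg ht.1.le _)
        · exact (intervalIntegrable_iff_integrableOn_Ioc_of_le hT).mpr
            ((hk.mono_set Ioc_subset_Ioi_self).const_mul _)
    _ = min 1 (lam * Δt) * ∫ t in Ioc 0 T, k t := by
        rw [intervalIntegral.integral_const_mul, integral_of_le hT]
    _ ≤ min 1 (lam * Δt) * ∫ t in Ioi 0, k t := by
        gcongr
        · filter_upwards [ae_restrict_mem measurableSet_Ioi] with t (ht : 0 < t)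
          positivity
        · exact Ioc_subset_Ioi_self
    _ ≤ _ := by gcongr

end ExpKernel

/-- Let `s ∈ (0,1)` and `r ∈ [0, 2−2s]`. There exists `C = C(r,s) > 0` such
that for all `λ > 0`, `Δt > 0` and every positive integer `N`, setting `T = NΔt` and
`φ(t) = e^{−λt}`, the piecewise-constant interpolant `I[φ]` of `φ` on the uniform grid
satisfies `|∫_0^T (I[φ](t) − φ(t)) t^{s−1} dt| ≤ C λ^{r/2} Δt^{s+r/2}`. -/
theorem stmt3 (s r : ℝ) (hs : s ∈ Set.Ioo (0:ℝ) 1) (hr : r ∈ Set.Icc (0:ℝ) (2 - 2*s)) :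
    ∃ C : ℝ, 0 < C ∧ ∀ lam Δt : ℝ, 0 < lam → 0 < Δt → ∀ N : ℕ, 0 < N →
      |∫ t in (0:ℝ)..((N:ℝ) * Δt),
          (pcInterp Δt (fun u => Real.exp (-lam * u)) t - Real.exp (-lam * t)) * t ^ (s - 1)|
        ≤ C * lam ^ (r / 2) * Δt ^ (s + r / 2) := by
  obtain ⟨hs₀, hs₁⟩ := hs
  obtain ⟨hr₀, hr₁⟩ := hr
  refine ⟨1 / s + Gamma s, by positivity, fun lam Δt hlam hΔt N _ => ?_⟩
  have hx : 0 < lam * Δt := mul_pos hlam hΔt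
  have h₁ : min 1 (lam * Δt) * (Δt ^ s / s) ≤ 1 / s * (lam ^ (r / 2) * Δt ^ (s + r / 2)) :=
    calc _ ≤ (lam * Δt) ^ (r / 2) * (Δt ^ s / s) := by
          gcongr; exact min_one_le_rpow hx (by linarith) (by linarith)
      _ = _ := by rw [mul_rpow hlam.le hΔt.le, rpow_add hΔt]; ring
  have h₂ : min 1 (lam * Δt) * ((1 / lam) ^ s * Gamma s)
      ≤ Gamma s * (lam ^ (r / 2) * Δt ^ (s + r / 2)) :=
    calc _ ≤ (lam * Δt) ^ (s + r / 2) * ((1 / lam) ^ s * Gamma s) := by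
          gcongr; exact min_one_le_rpow hx (by linarith) (by linarith)
      _ = _ := by
          rw [mul_rpow hlam.le hΔt.le, rpow_add hlam, div_rpow zero_le_one hlam.le, one_rpow]
          field_simp
  calc _ ≤ _ := abs_integral_pcInterp_exp_sub_mul_rpow_le hs₀ hs₁ hlam hΔt (by positivity)
    _ ≤ _ := by linarith [mul_add (min 1 (lam * Δt)) (Δt ^ s / s) ((1 / lam) ^ s * Gamma s)]
end

section
/- Let s ∈ (0,1) and r ∈ (2−2s, 2). There exists a constant C = C(r,s) > 0 such that for all λ > 0, all Δt > 0 and every positive integer N, setting T := NΔt, t_j := jΔt and φ(t) := e^{−λt}, the modified interpolant I[φ] of φ on the uniform grid satisfies |∫_0^T (I[φ](t) − φ(t)) t^{s−1} dt| ≤ C · λ^{r/2} · Δt^{s + r/2}. The constant C is independent of λ, Δt and N. -/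
open Real MeasureTheory intervalIntegral

/-- The piecewise-linear interpolant of `φ` on the uniform grid `t_j = jΔt`:
`I[φ](t) = ((t_{j+1}−t)/Δt)·φ(t_j) + ((t−t_j)/Δt)·φ(t_{j+1})` for `t ∈ [t_j, t_{j+1})`. -/
noncomputable def plInterp (Δt : ℝ) (φ : ℝ → ℝ) (t : ℝ) : ℝ :=
  ((((⌊t / Δt⌋₊ : ℝ) + 1) * Δt - t) / Δt) * φ ((⌊t / Δt⌋₊ : ℝ) * Δt) +
    ((t - (⌊t / Δt⌋₊ : ℝ) * Δt) / Δt) * φ (((⌊t / Δt⌋₊ : ℝ) + 1) * Δt)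

/-- The modified interpolant: `I[φ](t) = φ(t_1)` on `[t_0, t_1)`, and the
piecewise-linear interpolant on `[t_j, t_{j+1})` for `j ≥ 1`. -/
noncomputable def modInterp (Δt : ℝ) (φ : ℝ → ℝ) (t : ℝ) : ℝ :=
  if t < Δt then φ Δt else plInterp Δt φ t

/-! Write `x = λΔt`. On the first cell the error is `e^{-λt} - e^{-x} ≤ 1 - e^{-x} ≤ x^{r/2}`.
On a later cell `[t_j, t_{j+1}]`, convexity of the exponential makes the error nonnegative, and
comparing the chord with the tangent bounds it by `e^{-λt_j}(x - 1 + e^{-x})`, where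
`e^{-λt_j} ≤ e^{-λt/2}` because `j ≥ 1`, and `x - 1 + e^{-x} ≤ x^{s+r/2}`. The two elementary
inequalities `1 - e^{-x} ≤ x^β` and `x - 1 + e^{-x} ≤ x^α` hold for all `x > 0` when
`β ∈ [0,1]` and `α ∈ [1,2]`, which is what `r ∈ (2-2s, 2)` provides. Integrating against
`t^{s-1}` gives `x^{r/2}Δt^s/s + x^{s+r/2}(2/λ)^s Γ(s) = (1/s + 2^s Γ(s)) λ^{r/2} Δt^{s+r/2}`. -/

open Set

lemma one_sub_exp_neg_le_rpow {x β : ℝ} (hx : 0 < x) (hβ0 : 0 ≤ β) (hβ1 : β ≤ 1) :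
    1 - exp (-x) ≤ x ^ β := by
  rcases le_or_gt x 1 with hx1 | hx1
  · have h := add_one_le_exp (-x)
    have : x ^ (1 : ℝ) ≤ x ^ β := rpow_le_rpow_of_exponent_ge hx hx1 hβ1
    rw [rpow_one] at this
    linarith
  · have := one_le_rpow hx1.le hβ0
    linarith [exp_pos (-x)]

lemma sub_one_add_exp_neg_le_rpow {x α : ℝ} (hx : 0 < x) (hα1 : 1 ≤ α) (hα2 : α ≤ 2) :
    x - 1 + exp (-x) ≤ x ^ α := by
  rcases le_or_gt x 1 with hx1 | hx1
  · have h := abs_exp_sub_one_sub_id_le (x := -x) (by rw [abs_neg, abs_of_pos hx]; exact hx1)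
    have : x ^ (2 : ℝ) ≤ x ^ α := rpow_le_rpow_of_exponent_ge hx hx1 hα2
    rw [rpow_two, neg_sq] at *
    linarith [le_abs_self (exp (-x) - 1 - -x)]
  · have := rpow_le_rpow_of_exponent_le hx1.le hα1
    rw [rpow_one] at this
    linarith [exp_le_one_iff.2 (neg_nonpos.2 hx.le)]

lemma exp_neg_mul_le_chord {x b : ℝ} (hb0 : 0 ≤ b) (hb1 : b ≤ 1) :
    exp (-(x * b)) ≤ (1 - b) + b * exp (-x) := by
  have := convexOn_exp.2 (mem_univ 0) (mem_univ (-x)) (sub_nonneg.2 hb1) hb0 (by ring)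
  simpa [exp_zero, mul_comm x b] using this

lemma chord_sub_exp_neg_mul_le {x b : ℝ} (hb1 : b ≤ 1) :
    (1 - b) + b * exp (-x) - exp (-(x * b)) ≤ x - 1 + exp (-x) := by
  have hlin := add_one_le_exp (-(x * b))
  have hdefect : 0 ≤ x - 1 + exp (-x) := by linarith [add_one_le_exp (-x)]
  nlinarith

lemma plInterp_eq (φ : ℝ → ℝ) {Δt : ℝ} (hΔt : Δt ≠ 0) (t : ℝ) :
    plInterp Δt φ t = (1 - (t / Δt - ⌊t / Δt⌋₊)) * φ (⌊t / Δt⌋₊ * Δt) +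
      (t / Δt - ⌊t / Δt⌋₊) * φ ((⌊t / Δt⌋₊ + 1) * Δt) := by
  unfold plInterp
  congr 2 <;> field_simp
  ring

lemma plInterp_exp_sub_exp_bounds {lam Δt t : ℝ} (hlam : 0 ≤ lam) (hΔt : 0 < Δt) (ht : Δt ≤ t) :
    0 ≤ plInterp Δt (fun u => exp (-lam * u)) t - exp (-lam * t) ∧
      plInterp Δt (fun u => exp (-lam * u)) t - exp (-lam * t) ≤
        exp (-(lam / 2 * t)) * (lam * Δt - 1 + exp (-(lam * Δt))) := by
  set j : ℕ := ⌊t / Δt⌋₊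
  set b : ℝ := t / Δt - j
  have hj : (1 : ℝ) ≤ j := by
    exact_mod_cast Nat.le_floor (by rwa [Nat.cast_one, one_le_div hΔt])
  have hb0 : 0 ≤ b := sub_nonneg.2 (Nat.floor_le (div_nonneg (hΔt.le.trans ht) hΔt.le))
  have hb1 : b < 1 := by have := Nat.lt_floor_add_one (t / Δt); simp only [b]; linarith
  have ht_eq : t = (j + b) * Δt := by simp only [b]; field_simp; ring
  set E := exp (-lam * (j * Δt))
  have hnode : exp (-lam * ((j + 1) * Δt)) = E * exp (-(lam * Δt)) := by
    rw [← exp_add]; ring_nf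
  have hpoint : exp (-lam * t) = E * exp (-(lam * Δt * b)) := by
    rw [← exp_add, ht_eq]; ring_nf
  have hdiff : plInterp Δt (fun u => exp (-lam * u)) t - exp (-lam * t) =
      E * ((1 - b) + b * exp (-(lam * Δt)) - exp (-(lam * Δt * b))) := by
    rw [plInterp_eq _ hΔt.ne', hnode, hpoint]; ring
  -- `t < (j + 1) Δt ≤ 2 j Δt`, so the left node is at least `t / 2`
  have hE : E ≤ exp (-(lam / 2 * t)) := exp_le_exp.2 (by
    rw [ht_eq]; nlinarith [mul_nonneg hlam (mul_nonneg (by linarith : (0 : ℝ) ≤ j - b) hΔt.le)])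
  have hchord := exp_neg_mul_le_chord (x := lam * Δt) hb0 hb1.le
  rw [hdiff]
  exact ⟨mul_nonneg (exp_pos _).le (by linarith),
    mul_le_mul hE (chord_sub_exp_neg_mul_le hb1.le) (by linarith) (exp_pos _).le⟩

lemma abs_modInterp_exp_sub_exp_le {lam Δt t α β : ℝ} (hlam : 0 < lam) (hΔt : 0 < Δt)
    (ht : 0 < t) (hβ0 : 0 ≤ β) (hβ1 : β ≤ 1) (hα1 : 1 ≤ α) (hα2 : α ≤ 2) :
    |modInterp Δt (fun u => exp (-lam * u)) t - exp (-lam * t)| ≤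
      if t < Δt then (lam * Δt) ^ β else (lam * Δt) ^ α * exp (-(lam / 2 * t)) := by
  have hx : 0 < lam * Δt := mul_pos hlam hΔt
  unfold modInterp
  split_ifs with htΔt
  · have h0 : exp (-lam * t) ≤ 1 := exp_le_one_iff.2 (by nlinarith)
    have h1 : exp (-lam * Δt) ≤ exp (-lam * t) := exp_le_exp.2 (by nlinarith)
    have h2 := one_sub_exp_neg_le_rpow hx hβ0 hβ1
    rw [← neg_mul] at h2
    rw [abs_sub_comm, abs_of_nonneg (sub_nonneg.2 h1)]
    linarith
  · obtain ⟨hlo, hhi⟩ := plInterp_exp_sub_exp_bounds hlam.le hΔt (not_lt.1 htΔt)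
    rw [abs_of_nonneg hlo, mul_comm _ (exp _)]
    exact hhi.trans (mul_le_mul_of_nonneg_left (sub_one_add_exp_neg_le_rpow hx hα1 hα2)
      (exp_pos _).le)

lemma integral_rpow_mul_exp_neg_mul_le {s c u v : ℝ} (hs : 0 < s) (hc : 0 < c) (hu : 0 ≤ u)
    (huv : u ≤ v) : ∫ t in u..v, t ^ (s - 1) * exp (-(c * t)) ≤ (1 / c) ^ s * Gamma s := by
  have hint : IntegrableOn (fun t => t ^ (s - 1) * exp (-(c * t))) (Ioi 0) := by
    simpa [rpow_one, neg_mul] using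
      integrableOn_rpow_mul_exp_neg_mul_rpow (p := 1) (by linarith : -1 < s - 1) one_pos hc
  rw [← integral_rpow_mul_exp_neg_mul_Ioi hs hc, integral_of_le huv]
  refine setIntegral_mono_set hint ?_ (Ioc_subset_Ioi_self.trans (Ioi_subset_Ioi hu)).eventuallyLE
  exact ae_restrict_of_forall_mem measurableSet_Ioi fun t (ht : 0 < t) => by positivity

section Majorant

variable {s a b c Δt T : ℝ}

lemma ite_mul_rpow_ae_eq_left (hΔt : 0 < Δt) :
    (fun t => (if t < Δt then a else b * exp (-(c * t))) * t ^ (s - 1))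
      =ᵐ[volume.restrict (uIoc 0 Δt)] fun t => a * t ^ (s - 1) := by
  rw [uIoc_of_le hΔt.le, ← Measure.restrict_congr_set Ioo_ae_eq_Ioc]
  exact ae_restrict_of_forall_mem measurableSet_Ioo fun t ht => by simp [ht.2]

lemma ite_mul_rpow_eqOn_right (hT : Δt ≤ T) :
    EqOn (fun t => (if t < Δt then a else b * exp (-(c * t))) * t ^ (s - 1))
      (fun t => b * (t ^ (s - 1) * exp (-(c * t)))) (uIcc Δt T) := by
  intro t ht
  rw [uIcc_of_le hT] at ht
  simp only [if_neg (not_lt.2 ht.1)]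
  ring

lemma intervalIntegrable_ite_mul_rpow (hs : 0 < s) (hΔt : 0 < Δt) (hT : Δt ≤ T) :
    IntervalIntegrable (fun t => (if t < Δt then a else b * exp (-(c * t))) * t ^ (s - 1))
      volume 0 T := by
  have hleft : IntervalIntegrable (fun t => a * t ^ (s - 1)) volume 0 Δt :=
    (intervalIntegrable_rpow' (by linarith)).const_mul a
  have hright : IntervalIntegrable (fun t => b * (t ^ (s - 1) * exp (-(c * t)))) volume Δt T := by
    refine ContinuousOn.intervalIntegrable fun t ht => ?_
    rw [uIcc_of_le hT] at ht
    have ht0 : t ≠ 0 := (hΔt.trans_le ht.1).ne'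
    exact (((continuousAt_rpow_const _ _ (Or.inl ht0)).mul
      (by fun_prop : ContinuousAt (fun t => exp (-(c * t))) t)).const_mul b).continuousWithinAt
  exact (hleft.congr_ae (ite_mul_rpow_ae_eq_left hΔt).symm).trans
    (hright.congr ((ite_mul_rpow_eqOn_right hT).mono uIoc_subset_uIcc).symm)

lemma integral_ite_mul_rpow_le (hs : 0 < s) (hb : 0 ≤ b) (hc : 0 < c) (hΔt : 0 < Δt)
    (hT : Δt ≤ T) :
    ∫ t in 0..T, (if t < Δt then a else b * exp (-(c * t))) * t ^ (s - 1) ≤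
      a * (Δt ^ s / s) + b * ((1 / c) ^ s * Gamma s) := by
  have hint := intervalIntegrable_ite_mul_rpow (a := a) (b := b) (c := c) hs hΔt hT
  rw [← integral_add_adjacent_intervals (hint.mono_set ?_) (hint.mono_set ?_),
    integral_congr_ae_restrict (ite_mul_rpow_ae_eq_left hΔt), integral_congr
      (ite_mul_rpow_eqOn_right (s := s) (a := a) (b := b) (c := c) hT),
    intervalIntegral.integral_const_mul, intervalIntegral.integral_const_mul,
    integral_rpow (Or.inl (by linarith)), sub_add_cancel, zero_rpow hs.ne', sub_zero]
  · gcongr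
    exact integral_rpow_mul_exp_neg_mul_le hs hc hΔt.le hT
  · exact uIcc_subset_uIcc_left (mem_uIcc_of_le hΔt.le hT)
  · exact uIcc_subset_uIcc_right (mem_uIcc_of_le hΔt.le hT)

end Majorant

/-- Let `s ∈ (0,1)` and `r ∈ (2−2s, 2)`. There exists `C = C(r,s) > 0` such
that for all `λ > 0`, `Δt > 0` and every positive integer `N`, setting `T = NΔt` and
`φ(t) = e^{−λt}`, the modified interpolant `I[φ]` of `φ` on the uniform grid satisfies
`|∫_0^T (I[φ](t) − φ(t)) t^{s−1} dt| ≤ C λ^{r/2} Δt^{s+r/2}`. -/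
theorem stmt4 (s r : ℝ) (hs : s ∈ Set.Ioo (0:ℝ) 1) (hr : r ∈ Set.Ioo (2 - 2*s) 2) :
    ∃ C : ℝ, 0 < C ∧ ∀ lam Δt : ℝ, 0 < lam → 0 < Δt → ∀ N : ℕ, 0 < N →
      |∫ t in (0:ℝ)..((N:ℝ) * Δt),
          (modInterp Δt (fun u => Real.exp (-lam * u)) t - Real.exp (-lam * t)) * t ^ (s - 1)|
        ≤ C * lam ^ (r / 2) * Δt ^ (s + r / 2) := by
  obtain ⟨hs0, hs1⟩ := hs
  obtain ⟨hr1, hr2⟩ := hr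
  refine ⟨1 / s + 2 ^ s * Gamma s, by positivity, fun lam Δt hlam hΔt N hN => ?_⟩
  have hT : Δt ≤ N * Δt := le_mul_of_one_le_left hΔt.le (by exact_mod_cast hN)
  have hpoint : ∀ t ∈ Ioc 0 (N * Δt),
      ‖(modInterp Δt (fun u => exp (-lam * u)) t - exp (-lam * t)) * t ^ (s - 1)‖ ≤
        (if t < Δt then (lam * Δt) ^ (r / 2) else (lam * Δt) ^ (s + r / 2) * exp (-(lam / 2 * t)))
          * t ^ (s - 1) := fun t ht => by
    rw [norm_mul, norm_eq_abs, norm_of_nonneg (rpow_nonneg ht.1.le _)]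
    exact mul_le_mul_of_nonneg_right (abs_modInterp_exp_sub_exp_le hlam hΔt ht.1
      (by linarith) (by linarith) (by linarith) (by linarith)) (rpow_nonneg ht.1.le _)
  calc _ ≤ _ := norm_integral_le_of_norm_le (hΔt.le.trans hT) (ae_of_all _ hpoint)
        (intervalIntegrable_ite_mul_rpow hs0 hΔt hT)
    _ ≤ (lam * Δt) ^ (r / 2) * (Δt ^ s / s) +
          (lam * Δt) ^ (s + r / 2) * ((1 / (lam / 2)) ^ s * Gamma s) :=
        integral_ite_mul_rpow_le hs0 (by positivity) (by positivity) hΔt hT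
    _ = (1 / s + 2 ^ s * Gamma s) * lam ^ (r / 2) * Δt ^ (s + r / 2) := by
        rw [mul_rpow hlam.le hΔt.le, mul_rpow hlam.le hΔt.le, rpow_add hlam, rpow_add hΔt,
          one_div_div, div_rpow zero_le_two hlam.le]
        field_simp
end

section
/- Let s ∈ (0,1) and r ∈ [2, 4−2s]. There exists a constant C = C(r,s) > 0 such that for all λ > 0, all Δt > 0 and every positive integer N, setting T := NΔt, t_j := jΔt and φ(t) := e^{−λt}, the piecewise-linear interpolant I[φ] of φ on the uniform grid satisfies |∫_0^T (I[φ](t) − φ(t)) t^{s−1} dt| ≤ C · λ^{r/2} · Δt^{s + r/2}. The constant C is independent of λ, Δt and N. -/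
open Real MeasureTheory intervalIntegral

lemma measurable_plInterp {Δt : ℝ} {φ : ℝ → ℝ} (hφ : Measurable φ) :
    Measurable (plInterp Δt φ) := by
  have hfloor : Measurable fun t : ℝ => (⌊t / Δt⌋₊ : ℝ) :=
    measurable_from_top.comp (measurable_id.div_const Δt).nat_floor
  unfold plInterp
  fun_prop

lemma floor_div_mul_le {t Δt : ℝ} (ht : 0 ≤ t) (hd : 0 < Δt) : (⌊t / Δt⌋₊ : ℝ) * Δt ≤ t :=
  (le_div_iff₀ hd).1 (Nat.floor_le (div_nonneg ht hd.le))

lemma lt_floor_div_mul_add {t Δt : ℝ} (hd : 0 < Δt) : t < (⌊t / Δt⌋₊ : ℝ) * Δt + Δt := by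
  have := (div_lt_iff₀ hd).1 (Nat.lt_floor_add_one (t / Δt))
  linarith

lemma half_lt_floor_div_mul {t Δt : ℝ} (hd : 0 < Δt) (ht : Δt ≤ t) :
    t / 2 < (⌊t / Δt⌋₊ : ℝ) * Δt := by
  have := Nat.div_two_lt_floor ((one_le_div hd).2 ht)
  calc t / 2 = t / Δt / 2 * Δt := by field_simp
    _ < (⌊t / Δt⌋₊ : ℝ) * Δt := by gcongr

lemma exp_neg_sub_one_add_le_sq {x : ℝ} (hx : 0 ≤ x) : exp (-x) - 1 + x ≤ x ^ 2 := by
  rcases le_or_gt x 1 with hx1 | hx1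
  · have := (abs_le.1 (abs_exp_sub_one_sub_id_le (x := -x) (by rwa [abs_neg, abs_of_nonneg hx]))).2
    simpa [sub_neg_eq_add] using this
  · have : exp (-x) ≤ 1 := exp_le_one_iff.2 (by linarith)
    nlinarith

lemma abs_chord_exp_neg_sub_exp_neg_le {θ x : ℝ} (hθ0 : 0 ≤ θ) (hθ1 : θ ≤ 1) (hx : 0 ≤ x) :
    |(1 - θ) + θ * exp (-x) - exp (-(θ * x))| ≤ min 1 (x ^ 2) := by
  have hconv : exp (-(θ * x)) ≤ (1 - θ) + θ * exp (-x) := by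
    have := convexOn_exp.2 (Set.mem_univ 0) (Set.mem_univ (-x)) (sub_nonneg.2 hθ1) hθ0 (by ring)
    simpa [smul_eq_mul, mul_comm] using this
  rw [abs_of_nonneg (sub_nonneg.2 hconv)]
  have hexp : exp (-x) ≤ 1 := exp_le_one_iff.2 (neg_nonpos.2 hx)
  refine le_min (by nlinarith [exp_pos (-(θ * x))]) ?_
  have htangent : 1 - θ * x ≤ exp (-(θ * x)) := by linarith [add_one_le_exp (-(θ * x))]
  have hquad := exp_neg_sub_one_add_le_sq hx
  have : 0 ≤ exp (-x) - 1 + x := by linarith [add_one_le_exp (-x)]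
  nlinarith

lemma abs_plInterp_exp_sub_exp_le {lam Δt t : ℝ} (hl : 0 < lam) (hd : 0 < Δt) (ht : 0 ≤ t) :
    |plInterp Δt (fun u => exp (-lam * u)) t - exp (-lam * t)|
      ≤ min 1 ((lam * Δt) ^ 2) * exp (-lam * ((⌊t / Δt⌋₊ : ℝ) * Δt)) := by
  set a : ℝ := (⌊t / Δt⌋₊ : ℝ) * Δt with ha
  set θ : ℝ := (t - a) / Δt with hθ
  have hθ0 : 0 ≤ θ := div_nonneg (sub_nonneg.2 (floor_div_mul_le ht hd)) hd.le
  have hθ1 : θ ≤ 1 := (div_le_one hd).2 (by linarith [lt_floor_div_mul_add (t := t) hd])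
  have hsplit : plInterp Δt (fun u => exp (-lam * u)) t - exp (-lam * t)
      = exp (-lam * a) * ((1 - θ) + θ * exp (-(lam * Δt)) - exp (-(θ * (lam * Δt)))) := by
    have e1 : exp (-lam * ((⌊t / Δt⌋₊ + 1) * Δt)) = exp (-lam * a) * exp (-(lam * Δt)) := by
      rw [← exp_add, ha]; ring_nf
    have e2 : exp (-lam * t) = exp (-lam * a) * exp (-(θ * (lam * Δt))) := by
      rw [← exp_add, hθ]; field_simp; ring_nf
    have e3 : ((⌊t / Δt⌋₊ + 1) * Δt - t) / Δt = 1 - θ := by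
      rw [hθ, ha]; field_simp; ring
    simp only [plInterp, ← ha, ← hθ, e1, e2, e3]
    ring
  rw [hsplit, abs_mul, abs_of_pos (exp_pos _), mul_comm]
  gcongr
  exact abs_chord_exp_neg_sub_exp_neg_le hθ0 hθ1 (by positivity)

lemma abs_integral_le_of_abs_le_rpow {f : ℝ → ℝ} {s m b : ℝ} (hs : 0 < s) (hb : 0 ≤ b)
    (hf : ∀ t ∈ Set.Ioc 0 b, |f t| ≤ m * t ^ (s - 1)) :
    |∫ t in (0 : ℝ)..b, f t| ≤ m * (b ^ s / s) := by
  rw [← Real.norm_eq_abs]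
  calc ‖∫ t in (0 : ℝ)..b, f t‖ ≤ ∫ t in (0 : ℝ)..b, m * t ^ (s - 1) :=
        norm_integral_le_of_norm_le hb (Filter.Eventually.of_forall hf)
          ((intervalIntegrable_rpow' (r := s - 1) (by linarith)).const_mul m)
    _ = m * (b ^ s / s) := by
        rw [intervalIntegral.integral_const_mul, integral_rpow (Or.inl (by linarith))]
        simp [zero_rpow hs.ne']

lemma abs_integral_le_of_abs_le_rpow_mul_exp {f : ℝ → ℝ} {s c m a b : ℝ} (hs : 0 < s)
    (hc : 0 < c) (hm : 0 ≤ m) (ha : 0 ≤ a) (hab : a ≤ b)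
    (hf : ∀ t ∈ Set.Ioc a b, |f t| ≤ m * (t ^ (s - 1) * exp (-(c * t)))) :
    |∫ t in a..b, f t| ≤ m * ((1 / c) ^ s * Gamma s) := by
  have hgamma := integral_rpow_mul_exp_neg_mul_Ioi hs hc
  have hint : IntegrableOn (fun t => t ^ (s - 1) * exp (-(c * t))) (Set.Ioi 0) :=
    .of_integral_ne_zero (by rw [hgamma]; positivity)
  have hsub : Set.Ioc a b ⊆ Set.Ioi 0 := fun t ht => ha.trans_lt ht.1
  rw [← Real.norm_eq_abs]
  calc ‖∫ t in a..b, f t‖ ≤ ∫ t in a..b, m * (t ^ (s - 1) * exp (-(c * t))) :=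
        norm_integral_le_of_norm_le hab (Filter.Eventually.of_forall hf)
          (((intervalIntegrable_iff_integrableOn_Ioc_of_le hab).2 (hint.mono_set hsub)).const_mul m)
    _ = m * ∫ t in Set.Ioc a b, t ^ (s - 1) * exp (-(c * t)) := by
        rw [intervalIntegral.integral_const_mul, integral_of_le hab]
    _ ≤ m * ((1 / c) ^ s * Gamma s) := by
        rw [← hgamma]
        refine mul_le_mul_of_nonneg_left (setIntegral_mono_set hint ?_ hsub.eventuallyLE) hm
        filter_upwards [ae_restrict_mem measurableSet_Ioi] with t (ht : 0 < t)
        positivity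

lemma intervalIntegrable_of_abs_le_rpow {f : ℝ → ℝ} {s m b : ℝ} (hs : 0 < s) (hb : 0 ≤ b)
    (hm : 0 ≤ m) (hf_meas : Measurable f) (hf : ∀ t ∈ Set.Ioc 0 b, |f t| ≤ m * t ^ (s - 1)) :
    IntervalIntegrable f volume 0 b := by
  refine ((intervalIntegrable_rpow' (r := s - 1) (by linarith)).const_mul m).mono_fun
    hf_meas.aestronglyMeasurable ?_
  filter_upwards [ae_restrict_mem measurableSet_uIoc] with t ht
  rw [Set.uIoc_of_le hb] at ht
  rw [Real.norm_eq_abs, Real.norm_of_nonneg (mul_nonneg hm (rpow_nonneg ht.1.le _))]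
  exact hf t ht

lemma abs_integral_le_of_abs_le_mul_exp_floor {f : ℝ → ℝ} {s lam Δt T m : ℝ} (hs : 0 < s)
    (hl : 0 < lam) (hd : 0 < Δt) (hT : Δt ≤ T) (hm : 0 ≤ m) (hf_meas : Measurable f)
    (hf : ∀ t, 0 < t → |f t| ≤ m * exp (-lam * ((⌊t / Δt⌋₊ : ℝ) * Δt)) * t ^ (s - 1)) :
    |∫ t in (0 : ℝ)..T, f t| ≤ m * (Δt ^ s / s + (2 / lam) ^ s * Gamma s) := by
  have hf_near : ∀ t, 0 < t → |f t| ≤ m * t ^ (s - 1) := by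
    intro t ht
    calc |f t| ≤ m * exp (-lam * ((⌊t / Δt⌋₊ : ℝ) * Δt)) * t ^ (s - 1) := hf t ht
      _ ≤ m * 1 * t ^ (s - 1) := by
          gcongr
          rw [exp_le_one_iff, neg_mul, neg_nonpos]
          positivity
      _ = m * t ^ (s - 1) := by rw [mul_one]
  have hf_far : ∀ t ∈ Set.Ioc Δt T, |f t| ≤ m * (t ^ (s - 1) * exp (-(lam / 2 * t))) := by
    intro t ht
    have hhalf := half_lt_floor_div_mul hd ht.1.le
    calc |f t| ≤ m * exp (-lam * ((⌊t / Δt⌋₊ : ℝ) * Δt)) * t ^ (s - 1) := hf t (hd.trans ht.1)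
      _ ≤ m * exp (-(lam / 2 * t)) * t ^ (s - 1) := by
          have ht0 := (hd.trans ht.1).le
          gcongr
          nlinarith
      _ = m * (t ^ (s - 1) * exp (-(lam / 2 * t))) := by ring
  have hf_int : IntervalIntegrable f volume 0 T :=
    intervalIntegrable_of_abs_le_rpow hs (hd.le.trans hT) hm hf_meas fun t ht => hf_near t ht.1
  have hsub : Set.uIcc 0 Δt ⊆ Set.uIcc 0 T := by
    rw [Set.uIcc_of_le hd.le, Set.uIcc_of_le (hd.le.trans hT)]
    exact Set.Icc_subset_Icc_right hT
  have hsub' : Set.uIcc Δt T ⊆ Set.uIcc 0 T := by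
    rw [Set.uIcc_of_le hT, Set.uIcc_of_le (hd.le.trans hT)]
    exact Set.Icc_subset_Icc_left hd.le
  rw [← integral_add_adjacent_intervals (hf_int.mono_set hsub) (hf_int.mono_set hsub')]
  calc _ ≤ |∫ t in (0 : ℝ)..Δt, f t| + |∫ t in Δt..T, f t| := abs_add_le _ _
    _ ≤ m * (Δt ^ s / s) + m * ((1 / (lam / 2)) ^ s * Gamma s) :=
        add_le_add (abs_integral_le_of_abs_le_rpow hs hd.le fun t ht => hf_near t ht.1)
          (abs_integral_le_of_abs_le_rpow_mul_exp hs (by positivity) hm hd.le hT hf_far)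
    _ = m * (Δt ^ s / s + (2 / lam) ^ s * Gamma s) := by rw [one_div_div]; ring

lemma abs_integral_plInterp_exp_sub_exp_le {s lam Δt T : ℝ} (hs : 0 < s) (hl : 0 < lam)
    (hd : 0 < Δt) (hT : Δt ≤ T) :
    |∫ t in (0 : ℝ)..T,
        (plInterp Δt (fun u => exp (-lam * u)) t - exp (-lam * t)) * t ^ (s - 1)|
      ≤ min 1 ((lam * Δt) ^ 2) * (Δt ^ s / s + (2 / lam) ^ s * Gamma s) := by
  refine abs_integral_le_of_abs_le_mul_exp_floor hs hl hd hT (le_min zero_le_one (sq_nonneg _))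
    (((measurable_plInterp (by fun_prop)).sub (by fun_prop)).mul (by fun_prop)) fun t ht => ?_
  rw [abs_mul, abs_of_nonneg (rpow_nonneg ht.le _)]
  gcongr
  exact abs_plInterp_exp_sub_exp_le hl hd ht.le

lemma min_one_sq_mul_add_div_rpow_le {A B s p x : ℝ} (hA : 0 ≤ A) (hB : 0 ≤ B) (hs : 0 < s)
    (hp0 : 0 ≤ p) (hp : p ≤ 2 - s) (hx : 0 < x) :
    min 1 (x ^ 2) * (A + B / x ^ s) ≤ (A + B) * x ^ p := by
  rcases le_or_gt x 1 with hx1 | hx1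
  · have hsq : x ^ 2 ≤ x ^ p := by
      rw [← rpow_two]; exact rpow_le_rpow_of_exponent_ge hx hx1 (by linarith)
    have hsq_div : x ^ 2 / x ^ s ≤ x ^ p := by
      rw [← rpow_two, ← rpow_sub hx]; exact rpow_le_rpow_of_exponent_ge hx hx1 hp
    calc min 1 (x ^ 2) * (A + B / x ^ s) ≤ x ^ 2 * (A + B / x ^ s) := by
          gcongr; exact min_le_right _ _
      _ = A * x ^ 2 + B * (x ^ 2 / x ^ s) := by ring
      _ ≤ A * x ^ p + B * x ^ p := by gcongr
      _ = (A + B) * x ^ p := by ring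
  · have hxs : 1 ≤ x ^ s := one_le_rpow hx1.le hs.le
    calc min 1 (x ^ 2) * (A + B / x ^ s) ≤ 1 * (A + B / 1) := by
          gcongr
          · exact min_le_left _ _
      _ = (A + B) * 1 := by ring
      _ ≤ (A + B) * x ^ p := by gcongr; exact one_le_rpow hx1.le hp0

/-- Let `s ∈ (0,1)` and `r ∈ [2, 4−2s]`. There exists `C = C(r,s) > 0` such
that for all `λ > 0`, `Δt > 0` and every positive integer `N`, setting `T = NΔt` and
`φ(t) = e^{−λt}`, the piecewise-linear interpolant `I[φ]` of `φ` on the uniform grid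
satisfies `|∫_0^T (I[φ](t) − φ(t)) t^{s−1} dt| ≤ C λ^{r/2} Δt^{s+r/2}`. -/
theorem stmt5 (s r : ℝ) (hs : s ∈ Set.Ioo (0:ℝ) 1) (hr : r ∈ Set.Icc (2:ℝ) (4 - 2*s)) :
    ∃ C : ℝ, 0 < C ∧ ∀ lam Δt : ℝ, 0 < lam → 0 < Δt → ∀ N : ℕ, 0 < N →
      |∫ t in (0:ℝ)..((N:ℝ) * Δt),
          (plInterp Δt (fun u => Real.exp (-lam * u)) t - Real.exp (-lam * t)) * t ^ (s - 1)|
        ≤ C * lam ^ (r / 2) * Δt ^ (s + r / 2) := by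
  obtain ⟨hs0, -⟩ := hs
  obtain ⟨hr2, hr4⟩ := hr
  refine ⟨1 / s + 2 ^ s * Gamma s, by positivity, fun lam Δt hl hd N hN => ?_⟩
  have hT : Δt ≤ N * Δt := le_mul_of_one_le_left hd.le (by exact_mod_cast hN)
  calc _ ≤ min 1 ((lam * Δt) ^ 2) * (Δt ^ s / s + (2 / lam) ^ s * Gamma s) :=
        abs_integral_plInterp_exp_sub_exp_le hs0 hl hd hT
    _ = min 1 ((lam * Δt) ^ 2) * (1 / s + 2 ^ s * Gamma s / (lam * Δt) ^ s) * Δt ^ s := by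
        rw [div_rpow zero_le_two hl.le, mul_rpow hl.le hd.le]
        field_simp
    _ ≤ (1 / s + 2 ^ s * Gamma s) * (lam * Δt) ^ (r / 2) * Δt ^ s := by
        gcongr ?_ * _
        exact min_one_sq_mul_add_div_rpow_le (by positivity) (by positivity) hs0 (by linarith)
          (by linarith) (by positivity)
    _ = (1 / s + 2 ^ s * Gamma s) * lam ^ (r / 2) * Δt ^ (s + r / 2) := by
        rw [mul_rpow hl.le hd.le, rpow_add hd]
        ring
end

section
/- Let λ > 0, Δt > 0, let j ≥ 0 be an integer and set t_j := jΔt, t_{j+1} := (j+1)Δt. Let φ(t) := e^{−λt} and let L(t) := ((t_{j+1}−t)/Δt)·φ(t_j) + ((t−t_j)/Δt)·φ(t_{j+1}) be the linear interpolant of φ on [t_j, t_{j+1}]. Then for every t ∈ [t_j, t_{j+1}], L(t) − φ(t) = λ · ((t−t_j)(t_{j+1}−t)/Δt) · ∫_0^1 e^{−λ(t_j(1−ξ) + ξt)} · (1 − e^{−λΔt(1−ξ)}) dξ. -/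
open Real MeasureTheory intervalIntegral

lemma int_exp_lin (c d : ℝ) (hc : c ≠ 0) :
    ∫ ξ in (0:ℝ)..1, Real.exp (c * ξ + d) = (Real.exp (c + d) - Real.exp d) / c := by
  have hder : ∀ ξ : ℝ, HasDerivAt (fun ξ => Real.exp (c * ξ + d) / c)
      (Real.exp (c * ξ + d)) ξ := by
    intro ξ
    have h1 : HasDerivAt (fun ξ : ℝ => c * ξ + d) c ξ := by
      simpa using ((hasDerivAt_id ξ).const_mul c).add_const d
    have := h1.exp.div_const c
    simpa [mul_div_cancel_left₀ _ hc, mul_comm] using this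
  rw [intervalIntegral.integral_eq_sub_of_hasDerivAt (fun ξ _ => hder ξ)
    (Continuous.intervalIntegrable (by continuity) _ _)]
  simp [sub_div]

/-- Let `λ > 0`, `Δt > 0`, `j ≥ 0` an integer, `t_j = jΔt`,
`t_{j+1} = (j+1)Δt`, `φ(t) = e^{−λt}` and
`L(t) = ((t_{j+1}−t)/Δt)φ(t_j) + ((t−t_j)/Δt)φ(t_{j+1})` the linear interpolant of `φ`
on `[t_j, t_{j+1}]`. Then for every `t ∈ [t_j, t_{j+1}]`,
`L(t) − φ(t) = λ ((t−t_j)(t_{j+1}−t)/Δt) ∫_0^1 e^{−λ(t_j(1−ξ)+ξt)} (1 − e^{−λΔt(1−ξ)}) dξ`. -/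
theorem stmt8 (lam Δt : ℝ) (hlam : 0 < lam) (hΔt : 0 < Δt) (j : ℕ)
    (t : ℝ) (ht : t ∈ Set.Icc ((j:ℝ) * Δt) (((j:ℝ) + 1) * Δt)) :
    ((((j:ℝ) + 1) * Δt - t) / Δt) * Real.exp (-lam * ((j:ℝ) * Δt)) +
        ((t - (j:ℝ) * Δt) / Δt) * Real.exp (-lam * (((j:ℝ) + 1) * Δt)) -
        Real.exp (-lam * t)
      = lam * ((t - (j:ℝ) * Δt) * (((j:ℝ) + 1) * Δt - t) / Δt) *
          ∫ ξ in (0:ℝ)..1,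
            Real.exp (-lam * ((j:ℝ) * Δt * (1 - ξ) + ξ * t)) *
              (1 - Real.exp (-lam * (Δt * (1 - ξ)))) := by
  obtain ⟨h1, h2⟩ := ht
  rcases eq_or_lt_of_le h1 with heq | h1
  · subst heq
    have : ((j:ℝ) * Δt - (j:ℝ) * Δt) = 0 := by ring
    rw [this]
    field_simp
    ring
  rcases eq_or_lt_of_le h2 with heq | h2
  · subst heq
    have : (((j:ℝ) + 1) * Δt - ((j:ℝ) + 1) * Δt) = 0 := by ring
    rw [this]
    field_simp
    ring
  -- main case: jΔt < t < (j+1)Δt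
  set a : ℝ := (j:ℝ) * Δt with ha
  set b : ℝ := ((j:ℝ) + 1) * Δt with hb
  have hc1 : -lam * (t - a) ≠ 0 := by
    have : t - a ≠ 0 := sub_ne_zero.mpr (ne_of_gt h1)
    exact mul_ne_zero (neg_ne_zero.mpr hlam.ne') this
  have hc2 : -lam * (t - b) ≠ 0 := by
    have : t - b ≠ 0 := sub_ne_zero.mpr (ne_of_lt h2)
    exact mul_ne_zero (neg_ne_zero.mpr hlam.ne') this
  have hint : (∫ ξ in (0:ℝ)..1,
      Real.exp (-lam * (a * (1 - ξ) + ξ * t)) * (1 - Real.exp (-lam * (Δt * (1 - ξ)))))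
      = ∫ ξ in (0:ℝ)..1,
        (Real.exp ((-lam * (t - a)) * ξ + (-lam * a))
          - Real.exp ((-lam * (t - b)) * ξ + (-lam * b))) := by
    apply intervalIntegral.integral_congr
    intro ξ _
    have e1 : -lam * (a * (1 - ξ) + ξ * t) = (-lam * (t - a)) * ξ + (-lam * a) := by
      simp only [ha]; ring
    have e2 : -lam * (a * (1 - ξ) + ξ * t) + (-lam * (Δt * (1 - ξ)))
        = (-lam * (t - b)) * ξ + (-lam * b) := by
      simp only [ha, hb]; ring
    dsimp only
    calc Real.exp (-lam * (a * (1 - ξ) + ξ * t)) * (1 - Real.exp (-lam * (Δt * (1 - ξ))))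
        = Real.exp (-lam * (a * (1 - ξ) + ξ * t))
          - Real.exp (-lam * (a * (1 - ξ) + ξ * t) + -lam * (Δt * (1 - ξ))) := by
          rw [Real.exp_add]; ring
      _ = _ := by rw [e2, e1]
  rw [hint, intervalIntegral.integral_sub
      (Continuous.intervalIntegrable (by continuity) _ _)
      (Continuous.intervalIntegrable (by continuity) _ _),
    int_exp_lin _ _ hc1, int_exp_lin _ _ hc2]
  have e3 : -lam * (t - a) + -lam * a = -lam * t := by ring
  have e4 : -lam * (t - b) + -lam * b = -lam * t := by ring
  rw [e3, e4]
  have hta : t - a ≠ 0 := sub_ne_zero.mpr (ne_of_gt h1)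
  have htb : t - b ≠ 0 := sub_ne_zero.mpr (ne_of_lt h2)
  have hab : b - a = Δt := by simp only [ha, hb]; ring
  simp only [ha, hb] at hta htb ⊢
  field_simp
  ring
end

section
/- Let λ > 0, Δt > 0, let j ≥ 0 be an integer and set t_j := jΔt, t_{j+1} := (j+1)Δt. Let φ(t) := e^{−λt} and let L(t) := ((t_{j+1}−t)/Δt)·φ(t_j) + ((t−t_j)/Δt)·φ(t_{j+1}) be the linear interpolant of φ on [t_j, t_{j+1}]. Then for every t ∈ [t_j, t_{j+1}], 0 ≤ L(t) − φ(t) ≤ Δt · λ² · ∫_{t_j}^{t} e^{−λη} dη. -/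
open Real MeasureTheory intervalIntegral

lemma stmt9_int (c a b : ℝ) (hc : c ≠ 0) :
    ∫ x in a..b, Real.exp (c*x) = (Real.exp (c*b) - Real.exp (c*a))/c := by
  have h : ∀ x ∈ Set.uIcc a b, HasDerivAt (fun y => Real.exp (c*y) / c) (Real.exp (c*x)) x := by
    intro x _
    have := ((Real.hasDerivAt_exp (c*x)).comp x ((hasDerivAt_id x).const_mul c))
    simpa [mul_comm, mul_div_assoc, mul_div_cancel_left₀ _ hc] using this.div_const c
  rw [intervalIntegral.integral_eq_sub_of_hasDerivAt h
    ((Real.continuous_exp.comp (continuous_const.mul continuous_id)).intervalIntegrable a b)]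
  ring

lemma stmt9_key (x u : ℝ) (hx : 0 ≤ x) (hxu : x ≤ u) :
    (u - u^2) * (1 - Real.exp (-x)) ≤ x * (1 - Real.exp (-u)) := by
  have hu : 0 ≤ u := le_trans hx hxu
  have h1 : 1 - Real.exp (-x) ≤ x := by nlinarith [Real.add_one_le_exp (-x)]
  have h2 : 0 ≤ 1 - Real.exp (-x) := by
    have : Real.exp (-x) ≤ Real.exp 0 := Real.exp_le_exp.2 (by linarith)
    simpa using this
  have h4 : 0 ≤ 1 - Real.exp (-u) := by
    have : Real.exp (-u) ≤ Real.exp 0 := Real.exp_le_exp.2 (by linarith)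
    simpa using this
  have he : Real.exp (-u) * (1 + u) ≤ 1 := by
    have h5 := Real.add_one_le_exp u
    calc Real.exp (-u) * (1 + u) ≤ Real.exp (-u) * Real.exp u :=
          mul_le_mul_of_nonneg_left (by linarith) (Real.exp_pos _).le
      _ = 1 := by rw [← Real.exp_add]; simp
  have h3 : u - u^2 ≤ 1 - Real.exp (-u) := by
    nlinarith [mul_nonneg hu (mul_nonneg hu hu), Real.exp_pos (-u)]
  rcases le_or_gt (u - u^2) 0 with h | h
  · nlinarith [mul_nonneg hx h4, mul_nonneg h2 (neg_nonneg.2 h)]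
  · calc (u - u^2) * (1 - Real.exp (-x)) ≤ (u - u^2) * x :=
        mul_le_mul_of_nonneg_left h1 h.le
      _ = x * (u - u^2) := mul_comm _ _
      _ ≤ x * (1 - Real.exp (-u)) := mul_le_mul_of_nonneg_left h3 hx

/-- Let `λ > 0`, `Δt > 0`, `j ≥ 0` an integer, `t_j = jΔt`,
`t_{j+1} = (j+1)Δt`, `φ(t) = e^{−λt}` and
`L(t) = ((t_{j+1}−t)/Δt)φ(t_j) + ((t−t_j)/Δt)φ(t_{j+1})` the linear interpolant of `φ`
on `[t_j, t_{j+1}]`. Then for every `t ∈ [t_j, t_{j+1}]`,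
`0 ≤ L(t) − φ(t) ≤ Δt λ² ∫_{t_j}^t e^{−λη} dη`. -/
theorem stmt9 (lam Δt : ℝ) (hlam : 0 < lam) (hΔt : 0 < Δt) (j : ℕ)
    (t : ℝ) (ht : t ∈ Set.Icc ((j:ℝ) * Δt) (((j:ℝ) + 1) * Δt)) :
    0 ≤ ((((j:ℝ) + 1) * Δt - t) / Δt) * Real.exp (-lam * ((j:ℝ) * Δt)) +
          ((t - (j:ℝ) * Δt) / Δt) * Real.exp (-lam * (((j:ℝ) + 1) * Δt)) -
          Real.exp (-lam * t) ∧
      ((((j:ℝ) + 1) * Δt - t) / Δt) * Real.exp (-lam * ((j:ℝ) * Δt)) +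
          ((t - (j:ℝ) * Δt) / Δt) * Real.exp (-lam * (((j:ℝ) + 1) * Δt)) -
          Real.exp (-lam * t)
        ≤ Δt * lam ^ 2 * ∫ η in ((j:ℝ) * Δt)..t, Real.exp (-lam * η) := by
  obtain ⟨ht1, ht2⟩ := ht
  constructor
  · -- lower bound via convexity of exp
    have ha' : 0 ≤ ((((j:ℝ) + 1) * Δt - t) / Δt) := div_nonneg (by linarith) hΔt.le
    have hb' : 0 ≤ ((t - (j:ℝ) * Δt) / Δt) := div_nonneg (by linarith) hΔt.le
    have hab : ((((j:ℝ) + 1) * Δt - t) / Δt) + ((t - (j:ℝ) * Δt) / Δt) = 1 := by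
      field_simp
      ring
    have hc := convexOn_exp.2 (Set.mem_univ (-lam * ((j:ℝ) * Δt)))
      (Set.mem_univ (-lam * (((j:ℝ) + 1) * Δt))) ha' hb' hab
    simp only [smul_eq_mul] at hc
    have harg : ((((j:ℝ) + 1) * Δt - t) / Δt) * (-lam * ((j:ℝ) * Δt)) +
        ((t - (j:ℝ) * Δt) / Δt) * (-lam * (((j:ℝ) + 1) * Δt)) = -lam * t := by
      field_simp
      ring
    rw [harg] at hc
    linarith
  · -- upper bound
    have hint : ∫ η in ((j:ℝ) * Δt)..t, Real.exp (-lam * η)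
        = (Real.exp (-lam * ((j:ℝ) * Δt)) - Real.exp (-lam * t)) / lam := by
      rw [stmt9_int (-lam) _ _ (neg_ne_zero.2 hlam.ne')]
      rw [div_neg]
      ring
    rw [hint]
    have hB : ((j:ℝ) + 1) * Δt = (j:ℝ) * Δt + Δt := by ring
    rw [hB]
    have heE : Real.exp (-lam * t)
        = Real.exp (-lam * ((j:ℝ) * Δt)) * Real.exp (-(lam * (t - (j:ℝ) * Δt))) := by
      rw [← Real.exp_add]; congr 1; ring
    have heF : Real.exp (-lam * ((j:ℝ) * Δt + Δt))
        = Real.exp (-lam * ((j:ℝ) * Δt)) * Real.exp (-(lam * Δt)) := by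
      rw [← Real.exp_add]; congr 1; ring
    rw [heE, heF]
    have hx : 0 ≤ lam * (t - (j:ℝ) * Δt) := mul_nonneg hlam.le (by linarith)
    have hxu : lam * (t - (j:ℝ) * Δt) ≤ lam * Δt :=
      mul_le_mul_of_nonneg_left (by linarith) hlam.le
    have key := stmt9_key _ _ hx hxu
    have ha : (0:ℝ) < Real.exp (-lam * ((j:ℝ) * Δt)) := Real.exp_pos _
    have key2 := mul_le_mul_of_nonneg_right key ha.le
    rw [← sub_nonneg]
    have hrw : Δt * lam ^ 2 *
          ((Real.exp (-lam * ((j:ℝ) * Δt)) -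
            Real.exp (-lam * ((j:ℝ) * Δt)) * Real.exp (-(lam * (t - (j:ℝ) * Δt)))) / lam) -
        (((j:ℝ) * Δt + Δt - t) / Δt * Real.exp (-lam * ((j:ℝ) * Δt)) +
          (t - (j:ℝ) * Δt) / Δt *
            (Real.exp (-lam * ((j:ℝ) * Δt)) * Real.exp (-(lam * Δt))) -
          Real.exp (-lam * ((j:ℝ) * Δt)) * Real.exp (-(lam * (t - (j:ℝ) * Δt))))
        = (lam * (t - (j:ℝ) * Δt) * (1 - Real.exp (-(lam * Δt))) *
              Real.exp (-lam * ((j:ℝ) * Δt)) -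
            (lam * Δt - (lam * Δt) ^ 2) * (1 - Real.exp (-(lam * (t - (j:ℝ) * Δt)))) *
              Real.exp (-lam * ((j:ℝ) * Δt))) / (Δt * lam) := by
      field_simp
      ring
    rw [hrw]
    exact div_nonneg (by linarith) (by positivity)
end

section
/- Let s ∈ (0,1). There exists a constant C > 0 depending only on s such that for every integer j ≥ 1, (j+1)^{1+s} − 2·j^{1+s} + (j−1)^{1+s} ≤ C · ((j+1)^s − j^s). -/
open Real

private lemma mvt_rpow (p : ℝ) {a b : ℝ} (ha : 0 < a) (hab : a < b) :
    ∃ c ∈ Set.Ioo a b, b ^ p - a ^ p = p * c ^ (p - 1) * (b - a) := by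
  have hcont : ContinuousOn (fun x : ℝ => x ^ p) (Set.Icc a b) := by
    intro x hx
    exact (Real.continuousAt_rpow_const x p (Or.inl (lt_of_lt_of_le ha hx.1).ne')).continuousWithinAt
  have hdiff : ∀ x ∈ Set.Ioo a b, HasDerivAt (fun x : ℝ => x ^ p) (p * x ^ (p - 1)) x := by
    intro x hx
    exact Real.hasDerivAt_rpow_const (Or.inl (lt_trans ha hx.1).ne')
  obtain ⟨c, hc, hderiv⟩ := exists_deriv_eq_slope (fun x : ℝ => x ^ p) hab hcont
    (fun x hx => (hdiff x hx).differentiableAt.differentiableWithinAt)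
  refine ⟨c, hc, ?_⟩
  have : deriv (fun x : ℝ => x ^ p) c = p * c ^ (p - 1) := (hdiff c hc).deriv
  rw [this, eq_div_iff (by linarith : b - a ≠ 0)] at hderiv
  linarith [hderiv]

/-- Let `s ∈ (0,1)`. There exists `C > 0` depending only on `s` such that
for every integer `j ≥ 1`, `(j+1)^{1+s} − 2 j^{1+s} + (j−1)^{1+s} ≤ C ((j+1)^s − j^s)`. -/
theorem stmt15 (s : ℝ) (hs : s ∈ Set.Ioo (0:ℝ) 1) :
    ∃ C : ℝ, 0 < C ∧ ∀ j : ℕ, 1 ≤ j →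
      ((j:ℝ) + 1) ^ (1 + s) - 2 * (j:ℝ) ^ (1 + s) + ((j:ℝ) - 1) ^ (1 + s)
        ≤ C * (((j:ℝ) + 1) ^ s - (j:ℝ) ^ s) := by
  obtain ⟨hs0, hs1⟩ := hs
  refine ⟨12, by norm_num, ?_⟩
  intro j hj
  rcases eq_or_lt_of_le hj with h1 | h2
  · -- j = 1
    subst h1
    push_cast
    norm_num
    rw [Real.zero_rpow (by linarith : 1 + s ≠ 0), Real.rpow_add (by norm_num : (0:ℝ) < 2), Real.rpow_one]
    have h2s : (1:ℝ) ≤ (2:ℝ) ^ s := Real.one_le_rpow (by norm_num) hs0.le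
    nlinarith
  · -- j ≥ 2
    have hJ2 : (2 : ℝ) ≤ (j : ℝ) := by exact_mod_cast h2
    set J : ℝ := (j : ℝ) with hJ
    have hJ0 : (0:ℝ) < J := by linarith
    have hJm1 : (0:ℝ) < J - 1 := by linarith
    obtain ⟨c1, hc1m, hc1⟩ := mvt_rpow (1 + s) hJ0 (by linarith : J < J + 1)
    obtain ⟨c2, hc2m, hc2⟩ := mvt_rpow (1 + s) hJm1 (by linarith : J - 1 < J)
    have hc2pos : 0 < c2 := lt_trans hJm1 hc2m.1
    have hc12 : c2 < c1 := lt_trans hc2m.2 hc1m.1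
    obtain ⟨d, hdm, hd⟩ := mvt_rpow s hc2pos hc12
    obtain ⟨e, hem, he⟩ := mvt_rpow s hJ0 (by linarith : J < J + 1)
    have hexp : 1 + s - 1 = s := by ring
    rw [hexp] at hc1 hc2
    simp only [show J + 1 - J = 1 by ring, show J - (J - 1) = 1 by ring, mul_one] at hc1 hc2 he
    -- bounds
    have hdpos : 0 < d := lt_trans hc2pos hdm.1
    have hy : d ^ (s - 1) ≤ (J - 1) ^ (s - 1) :=
      Real.rpow_le_rpow_of_nonpos hJm1 (by linarith [hc2m.1, hdm.1]) (by linarith)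
    have hwz : (J + 1) ^ (s - 1) ≤ e ^ (s - 1) :=
      Real.rpow_le_rpow_of_nonpos (lt_trans hJ0 hem.1) (by linarith [hem.2]) (by linarith)
    have hv : (J - 1) ^ (s - 1) ≤ 3 * (J + 1) ^ (s - 1) := by
      have h3 : (3 : ℝ) ^ (s - 1) * (J - 1) ^ (s - 1) = (3 * (J - 1)) ^ (s - 1) :=
        (Real.mul_rpow (by norm_num) hJm1.le).symm
      have h4 : (3 * (J - 1)) ^ (s - 1) ≤ (J + 1) ^ (s - 1) :=
        Real.rpow_le_rpow_of_nonpos (by linarith) (by linarith) (by linarith)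
      have h5 : (J - 1) ^ (s - 1) = (3:ℝ) ^ (1 - s) * ((3:ℝ) ^ (s - 1) * (J - 1) ^ (s - 1)) := by
        rw [← mul_assoc, ← Real.rpow_add (by norm_num : (0:ℝ) < 3)]
        norm_num
      have h6 : (3:ℝ) ^ (1 - s) ≤ 3 := by
        calc (3:ℝ) ^ (1 - s) ≤ (3:ℝ) ^ (1:ℝ) :=
              Real.rpow_le_rpow_of_exponent_le (by norm_num) (by linarith)
          _ = 3 := Real.rpow_one 3
      have h7 : (0:ℝ) ≤ (3:ℝ) ^ (s - 1) * (J - 1) ^ (s - 1) := by positivity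
      calc (J - 1) ^ (s - 1) = (3:ℝ) ^ (1 - s) * ((3:ℝ) ^ (s - 1) * (J - 1) ^ (s - 1)) := h5
        _ ≤ 3 * ((J + 1) ^ (s - 1)) := by
            have := mul_le_mul h6 h4 (le_trans h7 (by linarith [h3] : (3:ℝ) ^ (s-1) * (J-1)^(s-1) ≤ (3*(J-1))^(s-1))) (by norm_num)
            nlinarith [h3, h4, h6, h7, Real.rpow_nonneg (by linarith : (0:ℝ) ≤ 3*(J-1)) (s-1)]
    have hc1c2 : c1 - c2 ≤ 2 := by linarith [hc1m.2, hc2m.1]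
    have hdnn : (0:ℝ) ≤ d ^ (s - 1) := Real.rpow_nonneg hdpos.le _
    have hwnn : (0:ℝ) ≤ (J + 1) ^ (s - 1) := Real.rpow_nonneg (by linarith) _
    have hznn : (0:ℝ) ≤ e ^ (s - 1) := Real.rpow_nonneg (lt_trans hJ0 hem.1).le _
    -- combine
    have key : c1 ^ s - c2 ^ s ≤ 6 * (s * e ^ (s - 1)) := by
      nlinarith [hd, mul_le_mul hy hc1c2 (by linarith [hc12] : (0:ℝ) ≤ c1 - c2) (Real.rpow_nonneg hJm1.le (s-1)),
        mul_le_mul_of_nonneg_left hv hs0.le, mul_le_mul_of_nonneg_left hwz hs0.le,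
        mul_nonneg hs0.le hdnn]
    nlinarith [hc1, hc2, he, mul_le_mul_of_nonneg_left key (by linarith : (0:ℝ) ≤ 1 + s),
      mul_nonneg (mul_nonneg hs0.le hznn) (by linarith : (0:ℝ) ≤ 1 - s)]
end
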